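/- For vectors x, y ∈ ℝ^n such that there is an index k with y↓_i = x↓_i for i = 1,…,k−1 and y↓_k ≥ x↓_k + ε for some ε > 0, the function Φ(z) = ∑_{i=1}^n (2n)^{z_i/ε} satisfies Φ(y) − Φ(x) ≥ (1/2)·(2n)^{y↓_k/ε} > 0. -/

import Mathlib

/-!
Write `g t = (2n)^(t/ε)`. After sorting both vectors, the terms before `k` cancel, the terms of `y`
from `k` on contribute at least `g (y↓_k)`, and each of the at most `n` terms of `x` from `k` on is
at most `g (x↓_k) ≤ g (y↓_k - ε) = g (y↓_k) / (2n)`, so together at most `g (y↓_k) / 2`.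
-/

open Finset

/-- The decreasing rearrangement of a vector in `ℝ^n`. -/
noncomputable def dRe {n : ℕ} (x : Fin n → ℝ) : Fin n → ℝ :=
  fun i => (x ∘ Tuple.sort x) i.rev

lemma dRe_antitone {n : ℕ} (x : Fin n → ℝ) : Antitone (dRe x) :=
  fun _ _ hij => Tuple.monotone_sort x (Fin.rev_le_rev.mpr hij)

lemma sum_comp_dRe {n : ℕ} (x : Fin n → ℝ) (f : ℝ → ℝ) :
    ∑ i, f (dRe x i) = ∑ i, f (x i) :=
  Equiv.sum_comp (Fin.revPerm.trans (Tuple.sort x)) (fun i => f (x i))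

lemma sub_card_mul_le_sum_sub_sum_of_eqOn_Iio {n : ℕ} {a c : Fin n → ℝ} (ha : Antitone a)
    {g : ℝ → ℝ} (hg : Monotone g) (hg0 : ∀ t, 0 ≤ g t) {k : Fin n}
    (hpre : ∀ i, i < k → c i = a i) :
    g (c k) - n * g (a k) ≤ ∑ i, g (c i) - ∑ i, g (a i) := by
  have hsplit (f : Fin n → ℝ) : ∑ i, f i = ∑ i ∈ Iio k, f i + ∑ i ∈ Ici k, f i := by
    rw [← sum_filter_add_sum_filter_not univ (· < k)]
    congr 2 <;> ext i <;> simp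
  have hhead : ∑ i ∈ Iio k, g (c i) = ∑ i ∈ Iio k, g (a i) :=
    sum_congr rfl fun i hi => by rw [hpre i (mem_Iio.mp hi)]
  have htail_c : g (c k) ≤ ∑ i ∈ Ici k, g (c i) :=
    single_le_sum (fun i _ => hg0 (c i)) (mem_Ici.mpr le_rfl)
  have htail_a : ∑ i ∈ Ici k, g (a i) ≤ n * g (a k) :=
    calc ∑ i ∈ Ici k, g (a i) ≤ ∑ _i ∈ Ici k, g (a k) :=
          sum_le_sum fun i hi => hg (ha (mem_Ici.mp hi))
      _ = #(Ici k) * g (a k) := by rw [sum_const, nsmul_eq_mul]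
      _ ≤ n * g (a k) := by
          gcongr
          · exact hg0 _
          · simp
  rw [hsplit fun i => g (c i), hsplit fun i => g (a i)]
  linarith

lemma rpow_sub_div_self {b : ℝ} (hb : 0 < b) {ε : ℝ} (hε : ε ≠ 0) (t : ℝ) :
    b ^ ((t - ε) / ε) = b ^ (t / ε) / b := by
  rw [sub_div, div_self hε, Real.rpow_sub hb, Real.rpow_one]

/-- if the decreasing rearrangements of `y` and `x` agree before
index `k` and `y↓_k ≥ x↓_k + ε`, then `Φ(y) − Φ(x) ≥ (1/2)·(2n)^(y↓_k/ε) > 0`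
for `Φ(z) = ∑ i, (2n)^(z_i/ε)`. -/
theorem stmt_7 {n : ℕ} (hn : 0 < n)
    (x y : Fin n → ℝ) (ε : ℝ) (hε : 0 < ε) (k : Fin n)
    (hpre : ∀ i : Fin n, i < k → dRe y i = dRe x i)
    (hk : dRe x k + ε ≤ dRe y k) :
    (1 / 2) * (2 * n : ℝ) ^ (dRe y k / ε) ≤
      (∑ i, (2 * n : ℝ) ^ (y i / ε)) - ∑ i, (2 * n : ℝ) ^ (x i / ε) ∧
    0 < (1 / 2) * (2 * n : ℝ) ^ (dRe y k / ε) := by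
  set g : ℝ → ℝ := fun t => (2 * n : ℝ) ^ (t / ε) with hg
  have hbase : (1 : ℝ) ≤ 2 * n := by
    have : (1 : ℝ) ≤ n := by exact_mod_cast hn
    linarith
  have hmono : Monotone g := (Real.monotone_rpow_of_base_ge_one hbase).comp
    fun _ _ h => div_le_div_of_nonneg_right h hε.le
  have hmain := sub_card_mul_le_sum_sub_sum_of_eqOn_Iio (dRe_antitone x) hmono
    (fun _ => by positivity) hpre
  rw [sum_comp_dRe, sum_comp_dRe] at hmain
  have hxk : g (dRe x k) ≤ g (dRe y k) / (2 * n) := by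
    rw [hg, ← rpow_sub_div_self (by positivity) hε.ne']
    exact hmono (by linarith)
  have hhalf : n * g (dRe x k) ≤ g (dRe y k) / 2 := by
    calc n * g (dRe x k) ≤ n * (g (dRe y k) / (2 * n)) := by gcongr
      _ = g (dRe y k) / 2 := by field_simp
  exact ⟨by linarith, by positivity⟩
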